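/- For every positive integer m, the 4-coloring of [8m+1] obtained by repeating the block ABCC m times, then the block DDAB m times, then one final element colored D, contains no rainbow 4-term arithmetic progression, and each color class has at least ⌊(8m+1)/4⌋ elements. -/
import Mathlib


inductive Color | A | B | C | D
  deriving DecidableEq

open Color

/-- A coloring `c` of `{1,...,n}` contains a rainbow 4-term AP. -/
def RainbowAP4 (n : ℕ) (c : ℕ → Color) : Prop :=
  ∃ t d : ℕ, 1 ≤ t ∧ 1 ≤ d ∧ t + 3*d ≤ n ∧
    c t ≠ c (t+d) ∧ c t ≠ c (t+2*d) ∧ c t ≠ c (t+3*d) ∧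
    c (t+d) ≠ c (t+2*d) ∧ c (t+d) ≠ c (t+3*d) ∧ c (t+2*d) ≠ c (t+3*d)

/-- The coloring for STATEMENT 1. -/
def col (m i : ℕ) : Color :=
  if i ≤ 4*m then (if i % 4 = 1 then A else if i % 4 = 2 then B else C) else if i ≤ 8*m then (if i % 4 = 1 ∨ i % 4 = 2 then D else if i % 4 = 3 then A else B) else D

def f1 (r : ℕ) : Color := if r = 1 then A else if r = 2 then B else C
def f2 (r : ℕ) : Color := if r = 1 ∨ r = 2 then D else if r = 3 then A else B
def cc (b : Bool) (x : ℕ) : Color := if b then f1 x else f2 x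

lemma key : ∀ (r s : Fin 4) (b0 b1 b2 b3 : Bool),
    (b1 = true → b0 = true) → (b2 = true → b1 = true) → (b3 = true → b2 = true) →
    ¬ (cc b0 r.val ≠ cc b1 ((r.val + s.val) % 4) ∧
       cc b0 r.val ≠ cc b2 ((r.val + 2*s.val) % 4) ∧
       cc b0 r.val ≠ cc b3 ((r.val + 3*s.val) % 4) ∧
       cc b1 ((r.val + s.val) % 4) ≠ cc b2 ((r.val + 2*s.val) % 4) ∧
       cc b1 ((r.val + s.val) % 4) ≠ cc b3 ((r.val + 3*s.val) % 4) ∧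
       cc b2 ((r.val + 2*s.val) % 4) ≠ cc b3 ((r.val + 3*s.val) % 4)) := by decide

lemma col_cc (m i : ℕ) (h2 : i ≤ 8*m+1) : col m i = cc (decide (i ≤ 4*m)) (i % 4) := by
  unfold col cc f1 f2
  by_cases h : i ≤ 4*m
  · simp [h]
  · by_cases h8 : i ≤ 8*m
    · simp [h, h8]
    · have hi : i % 4 = 1 := by omega
      simp [h, h8, hi]

theorem stmt_1 (m : ℕ) (hm : 0 < m) :
    ¬ RainbowAP4 (8*m+1) (col m) ∧ ∀ x : Color, (8*m+1)/4 ≤ ((Finset.Icc 1 (8*m+1)).filter (fun i => col m i = x)).card := by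
  constructor
  · rintro ⟨t, d, ht, hd, hle, h1, h2, h3, h4, h5, h6⟩
    have e0 := col_cc m t (by omega)
    have e1 := col_cc m (t+d) (by omega)
    have e2 := col_cc m (t+2*d) (by omega)
    have e3 := col_cc m (t+3*d) (by omega)
    have r1 : (t+d) % 4 = (t % 4 + d % 4) % 4 := by omega
    have r2 : (t+2*d) % 4 = (t % 4 + 2*(d % 4)) % 4 := by omega
    have r3 : (t+3*d) % 4 = (t % 4 + 3*(d % 4)) % 4 := by omega
    rw [e0, e1, r1] at h1
    rw [e0, e2, r2] at h2
    rw [e0, e3, r3] at h3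
    rw [e1, e2, r1, r2] at h4
    rw [e1, e3, r1, r3] at h5
    rw [e2, e3, r2, r3] at h6
    exact key ⟨t % 4, by omega⟩ ⟨d % 4, by omega⟩
      (decide (t ≤ 4*m)) (decide (t+d ≤ 4*m)) (decide (t+2*d ≤ 4*m)) (decide (t+3*d ≤ 4*m))
      (by simp only [decide_eq_true_eq]; omega)
      (by simp only [decide_eq_true_eq]; omega)
      (by simp only [decide_eq_true_eq]; omega)
      ⟨h1, h2, h3, h4, h5, h6⟩
  · have h8 : (8*m+1)/4 = 2*m := by omega
    intro x
    rw [h8]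
    have main : ∀ f : ℕ → ℕ, (∀ k ∈ Finset.range (2*m), f k ∈ (Finset.Icc 1 (8*m+1)).filter (fun i => col m i = x)) →
        Set.InjOn f (Finset.range (2*m)) →
        2*m ≤ ((Finset.Icc 1 (8*m+1)).filter (fun i => col m i = x)).card := by
      intro f hmem hinj
      calc 2*m = (Finset.range (2*m)).card := (Finset.card_range _).symm
        _ ≤ _ := Finset.card_le_card_of_injOn f hmem hinj
    cases x
    · apply main (fun k => if k < m then 4*k+1 else 4*k+3)
      · intro k hk
        simp only [Finset.mem_range] at hk
        simp only [Finset.mem_filter, Finset.mem_Icc]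
        by_cases hkm : k < m <;> simp only [if_pos, if_neg, hkm, if_true, if_false] <;>
          refine ⟨⟨by omega, by omega⟩, ?_⟩ <;>
          · unfold col
            split_ifs <;> first | rfl | omega
      · intro a ha b hb hab
        simp only [Finset.coe_range, Set.mem_Iio] at ha hb
        by_cases h1 : a < m <;> by_cases h2 : b < m <;> simp [h1, h2] at hab <;> omega
    · apply main (fun k => if k < m then 4*k+2 else 4*k+4)
      · intro k hk
        simp only [Finset.mem_range] at hk
        simp only [Finset.mem_filter, Finset.mem_Icc]
        by_cases hkm : k < m <;> simp only [if_pos, if_neg, hkm, if_true, if_false] <;>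
          refine ⟨⟨by omega, by omega⟩, ?_⟩ <;>
          · unfold col
            split_ifs <;> first | rfl | omega
      · intro a ha b hb hab
        simp only [Finset.coe_range, Set.mem_Iio] at ha hb
        by_cases h1 : a < m <;> by_cases h2 : b < m <;> simp [h1, h2] at hab <;> omega
    · apply main (fun k => if k % 2 = 0 then 2*k+3 else 2*k+2)
      · intro k hk
        simp only [Finset.mem_range] at hk
        simp only [Finset.mem_filter, Finset.mem_Icc]
        by_cases hkm : k % 2 = 0 <;> simp only [if_pos, if_neg, hkm, if_true, if_false] <;>
          refine ⟨⟨by omega, by omega⟩, ?_⟩ <;>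
          · unfold col
            split_ifs <;> first | rfl | omega
      · intro a ha b hb hab
        simp only [Finset.coe_range, Set.mem_Iio] at ha hb
        by_cases h1 : a % 2 = 0 <;> by_cases h2 : b % 2 = 0 <;> simp [h1, h2] at hab <;> omega
    · apply main (fun k => if k % 2 = 0 then 4*m+2*k+1 else 4*m+2*k)
      · intro k hk
        simp only [Finset.mem_range] at hk
        simp only [Finset.mem_filter, Finset.mem_Icc]
        by_cases hkm : k % 2 = 0 <;> simp only [if_pos, if_neg, hkm, if_true, if_false] <;>
          refine ⟨⟨by omega, by omega⟩, ?_⟩ <;>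
          · unfold col
            split_ifs <;> first | rfl | omega
      · intro a ha b hb hab
        simp only [Finset.coe_range, Set.mem_Iio] at ha hb
        by_cases h1 : a % 2 = 0 <;> by_cases h2 : b % 2 = 0 <;> simp [h1, h2] at hab <;> omega
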